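/- arXiv:1609.03236 — 2 statements merged into one kernel-verified Lean document; each statement's English description precedes it below -/
import Mathlib

section
/- Let V satisfy the basic assumptions with decay exponent a > 1. Then there exists a constant C > 0 such that for every ε ∈ ℓ²(ℕ) with −1/2 ≤ ε(i) ≤ 0 for all i ≥ 1, the quadratic-type part of the limit energy satisfies Q_∞(ε) := Σ_{k=1}^{∞} Σ_{j=0}^{∞} φ_k(Σ_{l=j+1}^{k+j} ε(l)) ≤ C ‖ε‖²_{ℓ²(ℕ)}. -/
open Filter Set MeasureTheory
open scoped Classical ENNReal NNReal BigOperators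

noncomputable section

/-- `lam V x` is λ(x) := inf_{(0,x)} V''. -/
def lam (V : ℝ → ℝ) (x : ℝ) : ℝ :=
  sInf (deriv (deriv V) '' Set.Ioo 0 x)

/-- The basic assumptions (Reg), (Sing), (Cvx), (Dec) on the interaction
potential `V`, with decay exponent `a`. -/
structure BasicAssumptions (V : ℝ → ℝ) (a : ℝ) : Prop where
  nonneg : ∀ x : ℝ, 0 ≤ V x
  even : ∀ x : ℝ, V (-x) = V x
  pos : ∀ x : ℝ, x ≠ 0 → 0 < V x
  smooth : ContDiffOn ℝ 2 V {(0 : ℝ)}ᶜ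
  sing : Filter.Tendsto V (nhdsWithin 0 {(0 : ℝ)}ᶜ) Filter.atTop
  cvx : ∀ x : ℝ, 0 < x → 0 < lam V x
  decV : Filter.Tendsto V Filter.atTop (nhds 0)
  decV' : Filter.Tendsto (deriv V) Filter.atTop (nhds 0)
  one_lt_a : 1 < a
  decV'' : ∀ δ : ℝ, 0 < δ → ∃ c : ℝ, 0 < c ∧
    ∀ x : ℝ, δ ≤ |x| → deriv (deriv V) x ≤ c * |x| ^ (-(a + 2))

/-- The configuration space 𝒟_n. -/
def Dn (n : ℕ) : Set (Fin (n + 1) → ℝ) :=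
  {x | x 0 = 0 ∧ x (Fin.last n) = 1 ∧ Monotone x}

/-- The energy E_n(x) := (1/n) Σ_{k=1}^{n} Σ_{j=0}^{n−k} V(n[x(j+k) − x(j)]),
valued in [0,∞], with the convention V(0) = +∞ from (Sing).  The double sum is
written as a sum over all pairs q < p. -/
def En (V : ℝ → ℝ) (n : ℕ) (x : Fin (n + 1) → ℝ) : ℝ≥0∞ :=
  ENNReal.ofReal (1 / (n : ℝ)) *
    ∑ p : Fin (n + 1), ∑ q : Fin (n + 1),
      if (q : ℕ) < (p : ℕ) then
        (if x p = x q then ⊤ else ENNReal.ofReal (V ((n : ℝ) * (x p - x q))))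
      else 0

/-- The first-order Taylor remainder φ_k(y) := V(k+y) − V(k) − V'(k)y. -/
def phi (V : ℝ → ℝ) (k y : ℝ) : ℝ :=
  V (k + y) - V k - deriv V k * y

/-- The lower-bound function Φ_k. -/
def PhiLB (V : ℝ → ℝ) (k y : ℝ) : ℝ :=
  if y ≤ 1 then 1 / 2 * lam V (k + 1) * y ^ 2 else lam V (k + 1) * (y - 1 / 2)

/-- σ^n(i) := Σ_{k=i+1}^{n−i} min(k−i, n−i+1−k)|V'(k)| for 1 ≤ i ≤ ⌊n/2⌋,
and 0 otherwise. -/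
def sigman (V : ℝ → ℝ) (n i : ℕ) : ℝ :=
  if 1 ≤ i ∧ i ≤ n / 2 then
    ∑ k ∈ Finset.Icc (i + 1) (n - i),
      ((min (k - i) (n + 1 - i - k) : ℕ) : ℝ) * |deriv V (k : ℝ)|
  else 0

/-- σ^∞(i) := Σ_{k=i+1}^∞ (k−i)|V'(k)| for i ≥ 1 (index 0 is inert). -/
def sigmaInf (V : ℝ → ℝ) (i : ℕ) : ℝ :=
  if i = 0 then 0
  else ∑' m : ℕ, ((m + 1 : ℕ) : ℝ) * |deriv V ((i + 1 + m : ℕ) : ℝ)|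

/-- Dom E_n^1 := {ε ∈ ℝ^n : −1 ≤ ε(i) ≤ n, Σ_{i=1}^n ε(i) = 0}, regarded as a
subset of ℓ²(ℕ) by extension by zero. -/
def DomEn1 (n : ℕ) : Set (ℕ → ℝ) :=
  {ε | (∀ i, 1 ≤ i → i ≤ n → -1 ≤ ε i ∧ ε i ≤ (n : ℝ)) ∧
    (∀ i, i = 0 ∨ n < i → ε i = 0) ∧
    (∑ i ∈ Finset.Icc 1 n, ε i) = 0}

/-- The renormalised energy
E_n^1(ε) := Σ_{k=1}^{n} Σ_{j=0}^{n−k} [V(k + Σ_{l=j+1}^{j+k} ε(l)) − V(k)]. -/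
def En1 (V : ℝ → ℝ) (n : ℕ) (ε : ℕ → ℝ) : ℝ :=
  ∑ k ∈ Finset.Icc 1 n, ∑ j ∈ Finset.range (n - k + 1),
    (V ((k : ℝ) + ∑ l ∈ Finset.Icc (j + 1) (j + k), ε l) - V (k : ℝ))

/-- The quadratic-type part Q_n(ε) := Σ_{k=1}^{n} Σ_{j=0}^{n−k} φ_k(Σ_{l=j+1}^{k+j} ε(l)). -/
def Qn (V : ℝ → ℝ) (n : ℕ) (ε : ℕ → ℝ) : ℝ :=
  ∑ k ∈ Finset.Icc 1 n, ∑ j ∈ Finset.range (n - k + 1),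
    phi V (k : ℝ) (∑ l ∈ Finset.Icc (j + 1) (j + k), ε l)

/-- The half truncation ε^{n,1/2}(i) := ε(i) for 1 ≤ i ≤ ⌈n/2⌉ and 0 otherwise. -/
def half (n : ℕ) (ε : ℕ → ℝ) (i : ℕ) : ℝ :=
  if 1 ≤ i ∧ i ≤ (n + 1) / 2 then ε i else 0

/-- The reversal ε⃖(i) := ε(n+1−i) for 1 ≤ i ≤ n, extended by zero. -/
def rev (n : ℕ) (ε : ℕ → ℝ) (i : ℕ) : ℝ :=
  if 1 ≤ i ∧ i ≤ n then ε (n + 1 - i) else 0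

/-- Dom E_∞^l := {ε ∈ ℓ²(ℕ) : ε(i) ≥ −1 for all i ≥ 1} (index 0 is inert). -/
def DomEinfl : Set (ℕ → ℝ) :=
  {ε | Summable (fun i => ε i ^ 2) ∧ ε 0 = 0 ∧ ∀ i, 1 ≤ i → -1 ≤ ε i}

/-- Q_∞(ε) := Σ_{k=1}^∞ Σ_{j=0}^∞ φ_k(Σ_{l=j+1}^{k+j} ε(l)), valued in [0,∞]
(the summands are nonnegative). -/
def Qinf (V : ℝ → ℝ) (ε : ℕ → ℝ) : ℝ≥0∞ :=
  ∑' (k : ℕ) (j : ℕ),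
    ENNReal.ofReal (phi V ((k : ℝ) + 1) (∑ l ∈ Finset.Icc (j + 1) (j + k + 1), ε l))

/-- The linear term (σ^∞, ε)_{ℓ²(ℕ)} as an extended real (difference of the
sums of the positive and negative parts). -/
def linPart (V : ℝ → ℝ) (ε : ℕ → ℝ) : EReal :=
  ((∑' i : ℕ, ENNReal.ofReal (sigmaInf V i * ε i) : ℝ≥0∞) : EReal) -
    ((∑' i : ℕ, ENNReal.ofReal (-(sigmaInf V i * ε i)) : ℝ≥0∞) : EReal)

/-- The limit boundary-layer energy E_∞^l(ε) := Q_∞(ε) + (σ^∞, ε), valued in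
the extended reals. -/
def Einfl (V : ℝ → ℝ) (ε : ℕ → ℝ) : EReal :=
  (Qinf V ε : EReal) + linPart V ε

end

/-! For `m ≥ 1` and `-m/2 ≤ y ≤ 0`, two mean value steps write the Taylor remainder as
`φ_m(y) = V''(η) (m - ξ) (-y)` with `m/2 ≤ m + y < ξ < η < m`, so the decay of `V''` gives
`φ_m(y) ≤ C m^(-a-2) y²`. A window sum `y = ∑_{l=j+1}^{j+m} ε(l)` lies in `[-m/2, 0]` and
satisfies `y² ≤ m ∑_{l=j+1}^{j+m} ε(l)²`; since every index lies in at most `m` windows of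
length `m`, the `m`-th row of `Q_∞` is at most `C m^(-a) ‖ε‖²`, which is summable in `m`
because `a > 1`. -/

theorem phi_le_mul_sq_of_deriv2_le {V : ℝ → ℝ} {m y B : ℝ} (hy : y ≤ 0) (hB : 0 ≤ B)
    (hV : ∀ x ∈ Icc (m + y) m, DifferentiableAt ℝ V x)
    (hV' : ∀ x ∈ Icc (m + y) m, DifferentiableAt ℝ (deriv V) x)
    (hV'' : ∀ x ∈ Icc (m + y) m, deriv (deriv V) x ≤ B) :
    phi V m y ≤ B * y ^ 2 := by
  rcases hy.eq_or_lt with rfl | hy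
  · simp [phi]
  have hmy : m + y < m := by linarith
  obtain ⟨ξ, hξ, hξ_slope⟩ := exists_deriv_eq_slope V hmy
    (fun x hx => (hV x hx).continuousAt.continuousWithinAt)
    (fun x hx => (hV x (Ioo_subset_Icc_self hx)).differentiableWithinAt)
  have hξm : Icc ξ m ⊆ Icc (m + y) m := Icc_subset_Icc_left hξ.1.le
  obtain ⟨η, hη, hη_slope⟩ := exists_deriv_eq_slope (deriv V) hξ.2
    (fun x hx => (hV' x (hξm hx)).continuousAt.continuousWithinAt)
    (fun x hx => (hV' x (hξm (Ioo_subset_Icc_self hx))).differentiableWithinAt)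
  have hξ_pos : 0 < m - ξ := sub_pos.2 hξ.2
  rw [show m - (m + y) = -y by ring, eq_div_iff (by linarith)] at hξ_slope
  rw [eq_div_iff hξ_pos.ne'] at hη_slope
  have hphi : phi V m y = deriv (deriv V) η * ((m - ξ) * -y) := by
    simp only [phi]; linear_combination hξ_slope + y * hη_slope
  calc phi V m y = deriv (deriv V) η * ((m - ξ) * -y) := hphi
    _ ≤ B * ((m - ξ) * -y) :=
        mul_le_mul_of_nonneg_right (hV'' η (hξm (Ioo_subset_Icc_self hη)))
          (by nlinarith)
    _ ≤ B * y ^ 2 := mul_le_mul_of_nonneg_left (by nlinarith [hξ.1]) hB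

theorem ENNReal.tsum_sum_Icc_le (g : ℕ → ℝ≥0∞) (n : ℕ) :
    ∑' j, ∑ l ∈ Finset.Icc (j + 1) (j + n), g l ≤ n * ∑' l, g l := by
  calc ∑' j, ∑ l ∈ Finset.Icc (j + 1) (j + n), g l
      = ∑' j, ∑ i ∈ Finset.range n, g (j + 1 + i) := by
        refine tsum_congr fun j => ?_
        rw [← Finset.Ico_add_one_right_eq_Icc, Finset.sum_Ico_eq_sum_range,
          show j + n + 1 - (j + 1) = n by omega]
    _ = ∑ i ∈ Finset.range n, ∑' j, g (j + 1 + i) :=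
        Summable.tsum_finsetSum fun _ _ => ENNReal.summable
    _ ≤ ∑ i ∈ Finset.range n, ∑' l, g l :=
        Finset.sum_le_sum fun i _ =>
          ENNReal.tsum_comp_le_tsum_of_injective (fun _ _ h => by simpa using h) g
    _ = n * ∑' l, g l := by simp

namespace BasicAssumptions

variable {V : ℝ → ℝ} {a : ℝ}

theorem differentiableAt (h : BasicAssumptions V a) {x : ℝ} (hx : x ≠ 0) :
    DifferentiableAt ℝ V x :=
  (h.smooth.differentiableOn (by norm_num)).differentiableAt
    (isOpen_compl_singleton.mem_nhds hx)

theorem differentiableAt_deriv (h : BasicAssumptions V a) {x : ℝ} (hx : x ≠ 0) :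
    DifferentiableAt ℝ (deriv V) x :=
  ((h.smooth.deriv_of_isOpen isOpen_compl_singleton (m := 1) (by norm_num)).differentiableOn
    (by norm_num)).differentiableAt (isOpen_compl_singleton.mem_nhds hx)

theorem exists_phi_le (h : BasicAssumptions V a) :
    ∃ C, 0 < C ∧ ∀ m y : ℝ, 1 ≤ m → -(m / 2) ≤ y → y ≤ 0 →
      phi V m y ≤ C * m ^ (-(a + 2)) * y ^ 2 := by
  obtain ⟨c, hc, hcV''⟩ := h.decV'' (1 / 2) (by norm_num)
  refine ⟨c * 2 ^ (a + 2), by positivity, fun m y hm hym hy => ?_⟩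
  have hhalf : ∀ x ∈ Icc (m + y) m, m / 2 ≤ x := fun x hx => by linarith [hx.1]
  have hne : ∀ x ∈ Icc (m + y) m, x ≠ 0 := fun x hx => by linarith [hhalf x hx]
  refine phi_le_mul_sq_of_deriv2_le hy (by positivity)
    (fun x hx => h.differentiableAt (hne x hx))
    (fun x hx => h.differentiableAt_deriv (hne x hx)) fun x hx => ?_
  have hx : m / 2 ≤ x := hhalf x hx
  have hx_abs : |x| = x := abs_of_pos (by linarith)
  calc deriv (deriv V) x ≤ c * |x| ^ (-(a + 2)) := hcV'' x (by rw [hx_abs]; linarith)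
    _ ≤ c * (m / 2) ^ (-(a + 2)) := by
        rw [hx_abs]
        exact mul_le_mul_of_nonneg_left
          (Real.rpow_le_rpow_of_nonpos (by linarith) hx (by linarith [h.one_lt_a])) hc.le
    _ = c * 2 ^ (a + 2) * m ^ (-(a + 2)) := by
        rw [Real.div_rpow (by linarith) zero_le_two, Real.rpow_neg zero_le_two]
        field_simp

end BasicAssumptions

section Windows

variable {V : ℝ → ℝ} {C a : ℝ} {ε : ℕ → ℝ}

theorem phi_window_le (hC0 : 0 ≤ C)
    (hC : ∀ m y : ℝ, 1 ≤ m → -(m / 2) ≤ y → y ≤ 0 → phi V m y ≤ C * m ^ (-(a + 2)) * y ^ 2)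
    (hε : ∀ i : ℕ, 1 ≤ i → -(1 / 2) ≤ ε i ∧ ε i ≤ 0) (k j : ℕ) :
    phi V ((k : ℝ) + 1) (∑ l ∈ Finset.Icc (j + 1) (j + k + 1), ε l) ≤
      C * ((k : ℝ) + 1) ^ (-(a + 1)) * ∑ l ∈ Finset.Icc (j + 1) (j + k + 1), ε l ^ 2 := by
  set s := Finset.Icc (j + 1) (j + k + 1)
  have hcard : s.card = k + 1 := by simp only [s, Nat.card_Icc]; omega
  have hs : ∀ l ∈ s, 1 ≤ l := fun l hl => (Finset.mem_Icc.1 hl).1.trans' (by omega)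
  have hsum_nonpos : ∑ l ∈ s, ε l ≤ 0 := Finset.sum_nonpos fun l hl => (hε l (hs l hl)).2
  have hsum_ge : -(((k : ℝ) + 1) / 2) ≤ ∑ l ∈ s, ε l := by
    have := Finset.card_nsmul_le_sum s ε (-(1 / 2)) fun l hl => (hε l (hs l hl)).1
    rw [hcard, nsmul_eq_mul] at this
    push_cast at this
    linarith
  have hsq : (∑ l ∈ s, ε l) ^ 2 ≤ ((k : ℝ) + 1) * ∑ l ∈ s, ε l ^ 2 := by
    simpa [hcard] using sq_sum_le_card_mul_sum_sq (s := s) (f := ε)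
  have hk : (0 : ℝ) < (k : ℝ) + 1 := by positivity
  calc phi V ((k : ℝ) + 1) (∑ l ∈ s, ε l)
      ≤ C * ((k : ℝ) + 1) ^ (-(a + 2)) * (∑ l ∈ s, ε l) ^ 2 :=
        hC _ _ (by linarith [k.cast_nonneg (α := ℝ)]) hsum_ge hsum_nonpos
    _ ≤ C * ((k : ℝ) + 1) ^ (-(a + 2)) * (((k : ℝ) + 1) * ∑ l ∈ s, ε l ^ 2) := by gcongr
    _ = C * ((k : ℝ) + 1) ^ (-(a + 1)) * ∑ l ∈ s, ε l ^ 2 := by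
        rw [show -(a + 1) = -(a + 2) + 1 by ring, Real.rpow_add_one hk.ne']
        ring

theorem tsum_ofReal_phi_window_le (hC0 : 0 ≤ C)
    (hC : ∀ m y : ℝ, 1 ≤ m → -(m / 2) ≤ y → y ≤ 0 → phi V m y ≤ C * m ^ (-(a + 2)) * y ^ 2)
    (hε : ∀ i : ℕ, 1 ≤ i → -(1 / 2) ≤ ε i ∧ ε i ≤ 0) (k : ℕ) :
    ∑' j, ENNReal.ofReal (phi V ((k : ℝ) + 1) (∑ l ∈ Finset.Icc (j + 1) (j + k + 1), ε l)) ≤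
      ENNReal.ofReal (C * ((k : ℝ) + 1) ^ (-a)) * ∑' l, ENNReal.ofReal (ε l ^ 2) := by
  have hk : (0 : ℝ) < (k : ℝ) + 1 := by positivity
  calc ∑' j, ENNReal.ofReal (phi V ((k : ℝ) + 1) (∑ l ∈ Finset.Icc (j + 1) (j + k + 1), ε l))
      ≤ ∑' j, ENNReal.ofReal (C * ((k : ℝ) + 1) ^ (-(a + 1))) *
          ∑ l ∈ Finset.Icc (j + 1) (j + (k + 1)), ENNReal.ofReal (ε l ^ 2) := by
        refine ENNReal.tsum_le_tsum fun j => ?_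
        rw [← ENNReal.ofReal_sum_of_nonneg fun _ _ => sq_nonneg _,
          ← ENNReal.ofReal_mul (by positivity)]
        exact ENNReal.ofReal_le_ofReal (phi_window_le hC0 hC hε k j)
    _ = ENNReal.ofReal (C * ((k : ℝ) + 1) ^ (-(a + 1))) *
          ∑' j, ∑ l ∈ Finset.Icc (j + 1) (j + (k + 1)), ENNReal.ofReal (ε l ^ 2) :=
        ENNReal.tsum_mul_left
    _ ≤ ENNReal.ofReal (C * ((k : ℝ) + 1) ^ (-(a + 1))) *
          (((k + 1 : ℕ) : ℝ≥0∞) * ∑' l, ENNReal.ofReal (ε l ^ 2)) := by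
        gcongr
        exact ENNReal.tsum_sum_Icc_le _ _
    _ = ENNReal.ofReal (C * ((k : ℝ) + 1) ^ (-a)) * ∑' l, ENNReal.ofReal (ε l ^ 2) := by
        rw [← mul_assoc, ← ENNReal.ofReal_natCast, ← ENNReal.ofReal_mul (by positivity),
          mul_assoc C, Nat.cast_succ, ← Real.rpow_add_one hk.ne', neg_add, neg_add_cancel_right]

end Windows

/-- quadratic upper bound for Q_∞ on sequences with
−1/2 ≤ ε(i) ≤ 0: Q_∞(ε) ≤ C‖ε‖²_{ℓ²(ℕ)}. -/
theorem statement17 (V : ℝ → ℝ) (a : ℝ) (h : BasicAssumptions V a) :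
    ∃ C : ℝ, 0 < C ∧ ∀ ε : ℕ → ℝ, Summable (fun i => ε i ^ 2) → ε 0 = 0 →
      (∀ i : ℕ, 1 ≤ i → -(1 / 2) ≤ ε i ∧ ε i ≤ 0) →
      Qinf V ε ≤ ENNReal.ofReal (C * ∑' i : ℕ, ε i ^ 2) := by
  obtain ⟨C, hC0, hC⟩ := h.exists_phi_le
  have hsum : Summable fun k : ℕ => ((k : ℝ) + 1) ^ (-a) := by
    simpa using (summable_nat_add_iff 1).2 (Real.summable_nat_rpow.2 (by linarith [h.one_lt_a]))
  set Z := ∑' k : ℕ, ((k : ℝ) + 1) ^ (-a)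
  have hZ : 0 < Z := hsum.tsum_pos (fun k => by positivity) 0 (by positivity)
  refine ⟨C * Z, by positivity, fun ε hε2 _ hε => ?_⟩
  calc Qinf V ε
      ≤ ∑' k : ℕ, ENNReal.ofReal (C * ((k : ℝ) + 1) ^ (-a)) * ∑' l, ENNReal.ofReal (ε l ^ 2) :=
        ENNReal.tsum_le_tsum (tsum_ofReal_phi_window_le hC0.le hC hε)
    _ = ENNReal.ofReal (C * Z) * ENNReal.ofReal (∑' l, ε l ^ 2) := by
        rw [ENNReal.tsum_mul_right, ← ENNReal.ofReal_tsum_of_nonneg (fun k => by positivity)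
          (hsum.mul_left C), tsum_mul_left, ENNReal.ofReal_tsum_of_nonneg (fun l => sq_nonneg _) hε2]
    _ = ENNReal.ofReal (C * Z * ∑' l, ε l ^ 2) := (ENNReal.ofReal_mul (by positivity)).symm
end

section
/- Let V satisfy the basic assumptions with decay exponent a satisfying 1 < a < 3/2, and assume additionally that there exist constants c₁, c₂ > 0 with c₁ x^{−a−2} ≤ V''(x) ≤ c₂ x^{−a−2} for all x ≥ 1. Let b satisfy 1/2 < b < 2 − a and define ε(i) := −i^{−b}/2 for i ≥ 1. Then ε ∈ Dom E_∞^l, the quadratic-type part Q_∞(ε) := Σ_{k=1}^{∞} Σ_{j=0}^{∞} φ_k(Σ_{l=j+1}^{k+j} ε(l)) is finite, while the linear part diverges: Σ_{i=1}^{∞} σ^∞(i)|ε(i)| = +∞. In particular, defining E_∞^l(ε) := Q_∞(ε) + Σ_{i=1}^{∞} σ^∞(i)ε(i) with values in [−∞, +∞], one has E_∞^l(ε) = −∞, so E_∞^l is not bounded from below on Dom E_∞^l when 1 < a < 3/2. -/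
open Filter Set MeasureTheory
open scoped Classical ENNReal NNReal BigOperators

/-!
Integrating `c₁ x^(-a-2) ≤ V'' ≤ c x^(-a-2)` from `x` to `∞`, where `V'` tends to `0`, gives
`|V'(x)| ≍ x^(-a-1)`. Hence `σ^∞(i) ≥ Σ_{m<i} (m+1)|V'(i+1+m)| ≳ i^(1-a)`, so that
`σ^∞(i)|ε(i)| ≳ i^(1-a-b)` is not summable because `b < 2 - a`.

For the quadratic part, the block sum `S` of `ε` over `[j+1, j+k+1]` satisfies
`(k+1) ε(j+1) ≤ S ≤ 0` since `ε` is nonpositive and nondecreasing, and `S ≥ -(k+1)/2`.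
On `[(k+1)/2, k+1]` we have `V'' ≲ (k+1)^(-a-2)`, so a second-order Taylor bound gives
`φ_{k+1}(S) ≲ (k+1)^(-a) ε(j+1)²`, which is summable in `k` because `a > 1` and in `j`
because `2b > 1`.
-/

open Topology

lemma differentiableAt_of_contDiffOn_compl_zero {V : ℝ → ℝ} (hV : ContDiffOn ℝ 2 V {0}ᶜ)
    {x : ℝ} (hx : x ≠ 0) : DifferentiableAt ℝ V x :=
  (hV.contDiffAt (isOpen_compl_singleton.mem_nhds hx)).differentiableAt (by norm_num)

lemma differentiableAt_deriv_of_contDiffOn_compl_zero {V : ℝ → ℝ}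
    (hV : ContDiffOn ℝ 2 V {0}ᶜ) {x : ℝ} (hx : x ≠ 0) : DifferentiableAt ℝ (deriv V) x :=
  ((hV.deriv_of_isOpen isOpen_compl_singleton le_rfl : ContDiffOn ℝ 1 (deriv V) _).contDiffAt
    (isOpen_compl_singleton.mem_nhds hx)).differentiableAt one_ne_zero

lemma le_of_deriv_le_of_tendsto_atTop {f g : ℝ → ℝ} {x₀ L : ℝ}
    (hf : ∀ t, x₀ ≤ t → DifferentiableAt ℝ f t) (hg : ∀ t, x₀ ≤ t → DifferentiableAt ℝ g t)
    (hfg : ∀ t, x₀ < t → deriv f t ≤ deriv g t)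
    (hfL : Tendsto f atTop (𝓝 L)) (hgL : Tendsto g atTop (𝓝 L)) : g x₀ ≤ f x₀ := by
  have hmono : MonotoneOn (fun t => g t - f t) (Ici x₀) := by
    refine monotoneOn_of_deriv_nonneg (convex_Ici x₀)
      (fun t ht => ((hg t ht).sub (hf t ht)).continuousAt.continuousWithinAt) ?_ ?_ <;>
      rw [interior_Ici]
    · exact fun t ht => ((hg t ht.le).sub (hf t ht.le)).differentiableWithinAt
    · intro t ht
      rw [deriv_fun_sub (hg t ht.le) (hf t ht.le), sub_nonneg]
      exact hfg t ht
  have hlim : Tendsto (fun t => g t - f t) atTop (𝓝 0) := by simpa using hgL.sub hfL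
  have := ge_of_tendsto hlim
    ((eventually_ge_atTop x₀).mono fun y hy => hmono self_mem_Ici hy hy)
  linarith

section PowerLawDecay

variable {a : ℝ}

lemma hasDerivAt_rpow_neg_primitive (ha : a ≠ -1) (c : ℝ) {t : ℝ} (ht : 0 < t) :
    HasDerivAt (fun s => -(c / (a + 1)) * s ^ (-(a + 1))) (c * t ^ (-(a + 2))) t := by
  have ha' : a + 1 ≠ 0 := fun h => ha (by linarith)
  refine ((Real.hasDerivAt_rpow_const (p := -(a + 1)) (Or.inl ht.ne')).const_mul
    (-(c / (a + 1)))).congr_deriv ?_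
  rw [show -(a + 1) - 1 = -(a + 2) by ring]
  field_simp

lemma tendsto_rpow_neg_primitive (ha : -1 < a) (c : ℝ) :
    Tendsto (fun s : ℝ => -(c / (a + 1)) * s ^ (-(a + 1))) atTop (𝓝 0) := by
  simpa using (tendsto_rpow_neg_atTop (by linarith : 0 < a + 1)).const_mul (-(c / (a + 1)))

variable {f : ℝ → ℝ} {c x₀ : ℝ}

lemma neg_le_of_deriv_le_rpow (ha : -1 < a) (hx₀ : 0 < x₀)
    (hf : ∀ t, x₀ ≤ t → DifferentiableAt ℝ f t) (hf0 : Tendsto f atTop (𝓝 0))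
    (hle : ∀ t, x₀ ≤ t → deriv f t ≤ c * t ^ (-(a + 2))) :
    -f x₀ ≤ c / (a + 1) * x₀ ^ (-(a + 1)) := by
  have hG := fun t (ht : x₀ ≤ t) => hasDerivAt_rpow_neg_primitive ha.ne' c (hx₀.trans_le ht)
  have := le_of_deriv_le_of_tendsto_atTop hf (fun t ht => (hG t ht).differentiableAt)
    (fun t ht => (hG t ht.le).deriv ▸ hle t ht.le) hf0 (tendsto_rpow_neg_primitive ha c)
  linarith

lemma le_neg_of_rpow_le_deriv (ha : -1 < a) (hx₀ : 0 < x₀)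
    (hf : ∀ t, x₀ ≤ t → DifferentiableAt ℝ f t) (hf0 : Tendsto f atTop (𝓝 0))
    (hge : ∀ t, x₀ ≤ t → c * t ^ (-(a + 2)) ≤ deriv f t) :
    c / (a + 1) * x₀ ^ (-(a + 1)) ≤ -f x₀ := by
  have hG := fun t (ht : x₀ ≤ t) => hasDerivAt_rpow_neg_primitive ha.ne' c (hx₀.trans_le ht)
  have := le_of_deriv_le_of_tendsto_atTop (fun t ht => (hG t ht).differentiableAt) hf
    (fun t ht => (hG t ht.le).deriv ▸ hge t ht.le) (tendsto_rpow_neg_primitive ha c) hf0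
  linarith

end PowerLawDecay

section Potential

variable {V : ℝ → ℝ} {a : ℝ}

lemma phi_le_mul_sq (hV : ContDiffOn ℝ 2 V {0}ᶜ) {x y M : ℝ} (hxy : 0 < x + y) (hy : y ≤ 0)
    (hM0 : 0 ≤ M) (hM : ∀ t ∈ Icc (x + y) x, deriv (deriv V) t ≤ M) :
    phi V x y ≤ M * y ^ 2 := by
  rcases hy.eq_or_lt with rfl | hy
  · simp [phi]
  have hpos : ∀ t ∈ Icc (x + y) x, t ≠ 0 := fun t ht => (hxy.trans_le ht.1).ne'
  obtain ⟨η, hη, hslope⟩ := exists_deriv_eq_slope V (by linarith : x + y < x)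
    (fun t ht => (differentiableAt_of_contDiffOn_compl_zero hV
      (hpos t ht)).continuousAt.continuousWithinAt)
    (fun t ht => (differentiableAt_of_contDiffOn_compl_zero hV
      (hpos t (Ioo_subset_Icc_self ht))).differentiableWithinAt)
  have hlip : deriv V x - deriv V η ≤ M * (x - η) :=
    (convex_Icc (x + y) x).image_sub_le_mul_sub_of_deriv_le
      (fun t ht => (differentiableAt_deriv_of_contDiffOn_compl_zero hV
        (hpos t ht)).continuousAt.continuousWithinAt)
      (fun t ht => (differentiableAt_deriv_of_contDiffOn_compl_zero hV
        (hpos t (interior_subset ht))).differentiableWithinAt)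
      (fun t ht => hM t (interior_subset ht)) η (Ioo_subset_Icc_self hη) x
      ⟨by linarith, le_rfl⟩ hη.2.le
  have hphi : phi V x y = (deriv V x - deriv V η) * (-y) := by
    have hy0 : y ≠ 0 := hy.ne
    rw [phi, hslope, show x - (x + y) = -y by ring]
    field_simp
    ring
  calc phi V x y = (deriv V x - deriv V η) * (-y) := hphi
    _ ≤ M * (-y) * (-y) := by
      gcongr
      · linarith
      · exact hlip.trans (by gcongr; linarith [hη.1])
    _ = M * y ^ 2 := by ring

lemma exists_rpow_bounds_abs_deriv (h : BasicAssumptions V a) {c₁ : ℝ} (hc₁ : 0 ≤ c₁)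
    (hV'' : ∀ x : ℝ, 1 ≤ x → c₁ * x ^ (-(a + 2)) ≤ deriv (deriv V) x) :
    ∃ C, ∀ x : ℝ, 1 ≤ x →
      c₁ / (a + 1) * x ^ (-(a + 1)) ≤ |deriv V x| ∧ |deriv V x| ≤ C * x ^ (-(a + 1)) := by
  obtain ⟨c, -, hc⟩ := h.decV'' 1 one_pos
  refine ⟨c / (a + 1), fun x hx => ?_⟩
  have ha : -1 < a := by linarith [h.one_lt_a]
  have hx0 : 0 < x := by linarith
  have hdiff : ∀ t, x ≤ t → DifferentiableAt ℝ (deriv V) t := fun t ht =>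
    differentiableAt_deriv_of_contDiffOn_compl_zero h.smooth (hx0.trans_le ht).ne'
  have hlow := le_neg_of_rpow_le_deriv ha hx0 hdiff h.decV' fun t ht => hV'' t (hx.trans ht)
  have hup := neg_le_of_deriv_le_rpow ha hx0 hdiff h.decV' fun t ht => by
    simpa [abs_of_pos (hx0.trans_le ht)] using hc t (by rw [abs_of_pos (hx0.trans_le ht)]; linarith)
  have : 0 ≤ c₁ / (a + 1) * x ^ (-(a + 1)) := by
    have : 0 < a + 1 := by linarith
    positivity
  rw [abs_of_nonpos (by linarith)]
  exact ⟨hlow, hup⟩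

end Potential

section SigmaInf

variable {V : ℝ → ℝ} {a : ℝ}

lemma sigmaInf_nonneg (V : ℝ → ℝ) (i : ℕ) : 0 ≤ sigmaInf V i := by
  unfold sigmaInf
  split_ifs
  exacts [le_rfl, tsum_nonneg fun m => by positivity]

lemma summable_sigmaInf_terms {C : ℝ} (ha : 1 < a)
    (hup : ∀ x : ℝ, 1 ≤ x → |deriv V x| ≤ C * x ^ (-(a + 1))) (i : ℕ) :
    Summable (fun m : ℕ => ((m + 1 : ℕ) : ℝ) * |deriv V ((i + 1 + m : ℕ) : ℝ)|) := by
  have hC : 0 ≤ C := by simpa using (abs_nonneg _).trans (hup 1 le_rfl)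
  refine Summable.of_nonneg_of_le (fun m => by positivity) (fun m => ?_)
    (((summable_nat_add_iff 1).mpr (Real.summable_nat_rpow.mpr (by linarith : -a < -1))).mul_left C)
  set n : ℝ := ((m + 1 : ℕ) : ℝ)
  have hn : 1 ≤ n := by simp [n]
  have hni : n ≤ ((i + 1 + m : ℕ) : ℝ) := by simp only [n]; exact_mod_cast (by omega)
  calc n * |deriv V ((i + 1 + m : ℕ) : ℝ)|
      ≤ n * (C * ((i + 1 + m : ℕ) : ℝ) ^ (-(a + 1))) := by
        gcongr
        exact hup _ (hn.trans hni)
    _ ≤ n * (C * n ^ (-(a + 1))) := by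
        have hn0 : (0 : ℝ) < n := by linarith
        exact mul_le_mul_of_nonneg_left (mul_le_mul_of_nonneg_left
          (Real.rpow_le_rpow_of_nonpos hn0 hni (by linarith)) hC) hn0.le
    _ = C * n ^ (-a) := by
        rw [show -a = 1 + -(a + 1) by ring, Real.rpow_add (by linarith), Real.rpow_one]
        ring

lemma rpow_le_sigmaInf {c : ℝ} (ha : 1 < a) (hc : 0 ≤ c)
    (hlow : ∀ x : ℝ, 1 ≤ x → c * x ^ (-(a + 1)) ≤ |deriv V x|) (i : ℕ)
    (hsum : Summable (fun m : ℕ => ((m + 1 : ℕ) : ℝ) * |deriv V ((i + 1 + m : ℕ) : ℝ)|)) :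
    c * 2 ^ (-(a + 1)) / 2 * (i : ℝ) ^ (1 - a) ≤ sigmaInf V i := by
  rcases Nat.eq_zero_or_pos i with rfl | hi
  · simp [sigmaInf, Real.zero_rpow (by linarith : 1 - a ≠ 0)]
  have hi1 : (1 : ℝ) ≤ i := by exact_mod_cast hi
  have hi0 : (0 : ℝ) < i := by linarith
  set D : ℝ := c * (2 * (i : ℝ)) ^ (-(a + 1))
  have hterm : ∀ m ∈ Finset.range i,
      ((m + 1 : ℕ) : ℝ) * D ≤ ((m + 1 : ℕ) : ℝ) * |deriv V ((i + 1 + m : ℕ) : ℝ)| := by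
    intro m hm
    have hm : ((i + 1 + m : ℕ) : ℝ) ≤ 2 * i := by
      have := Finset.mem_range.mp hm
      exact_mod_cast (by omega : i + 1 + m ≤ 2 * i)
    refine mul_le_mul_of_nonneg_left ((mul_le_mul_of_nonneg_left ?_ hc).trans
      (hlow _ (by push_cast; linarith))) (by positivity)
    exact Real.rpow_le_rpow_of_nonpos (by positivity) hm (by linarith)
  have hgauss : ∀ n : ℕ, ∑ m ∈ Finset.range n, ((m + 1 : ℕ) : ℝ) = n * (n + 1) / 2 := by
    intro n
    induction n with
    | zero => simp
    | succ n ih => rw [Finset.sum_range_succ, ih]; push_cast; ring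
  have hD : D = c * 2 ^ (-(a + 1)) * (i : ℝ) ^ (-(a + 1)) := by
    simp only [D, Real.mul_rpow (by norm_num : (0 : ℝ) ≤ 2) hi0.le]; ring
  have hpow : (i : ℝ) ^ (1 - a) = (i : ℝ) ^ 2 * (i : ℝ) ^ (-(a + 1)) := by
    rw [← Real.rpow_natCast, ← Real.rpow_add hi0]; norm_num; ring_nf
  rw [sigmaInf, if_neg hi.ne']
  calc c * 2 ^ (-(a + 1)) / 2 * (i : ℝ) ^ (1 - a)
      ≤ (i * (i + 1) / 2) * D := by
        rw [hD, hpow]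
        have : 0 ≤ c * 2 ^ (-(a + 1)) * (i : ℝ) ^ (-(a + 1)) := by positivity
        nlinarith
    _ = ∑ m ∈ Finset.range i, ((m + 1 : ℕ) : ℝ) * D := by rw [← Finset.sum_mul, hgauss]
    _ ≤ ∑ m ∈ Finset.range i, ((m + 1 : ℕ) : ℝ) * |deriv V ((i + 1 + m : ℕ) : ℝ)| :=
        Finset.sum_le_sum hterm
    _ ≤ _ := hsum.sum_le_tsum _ fun m _ => by positivity

end SigmaInf

lemma tsum_tsum_ofReal_lt_top_of_le_mul {F : ℕ → ℕ → ℝ} {u v : ℕ → ℝ} (hu0 : ∀ k, 0 ≤ u k)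
    (hv0 : ∀ j, 0 ≤ v j) (hu : Summable u) (hv : Summable v) (hF : ∀ k j, F k j ≤ u k * v j) :
    ∑' (k : ℕ) (j : ℕ), ENNReal.ofReal (F k j) < ⊤ :=
  calc ∑' (k : ℕ) (j : ℕ), ENNReal.ofReal (F k j)
      ≤ ∑' (k : ℕ) (j : ℕ), ENNReal.ofReal (u k) * ENNReal.ofReal (v j) :=
        ENNReal.tsum_le_tsum fun k => ENNReal.tsum_le_tsum fun j =>
          (ENNReal.ofReal_le_ofReal (hF k j)).trans_eq (ENNReal.ofReal_mul (hu0 k))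
    _ = ENNReal.ofReal (∑' k, u k) * ENNReal.ofReal (∑' j, v j) := by
        simp_rw [ENNReal.tsum_mul_left, ENNReal.tsum_mul_right,
          ENNReal.ofReal_tsum_of_nonneg hu0 hu, ENNReal.ofReal_tsum_of_nonneg hv0 hv]
    _ < ⊤ := ENNReal.mul_lt_top ENNReal.ofReal_lt_top ENNReal.ofReal_lt_top

section Energy

variable {V : ℝ → ℝ} {a : ℝ}

lemma Qinf_lt_top (h : BasicAssumptions V a) {ε : ℕ → ℝ} (hε0 : ∀ i, ε i ≤ 0)
    (hmono : MonotoneOn ε (Ici 1)) (hε1 : -(1 / 2) ≤ ε 1) (hsq : Summable fun i => ε i ^ 2) :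
    Qinf V ε < ⊤ := by
  obtain ⟨c, hc0, hc⟩ := h.decV'' (1 / 2) (by norm_num)
  refine tsum_tsum_ofReal_lt_top_of_le_mul (u := fun k => c * 2 ^ (a + 2) * ((k : ℝ) + 1) ^ (-a))
    (v := fun j => ε (j + 1) ^ 2) (fun k => by positivity) (fun j => sq_nonneg _)
    (((summable_nat_add_iff 1).mpr
      (Real.summable_nat_rpow.mpr (by linarith [h.one_lt_a] : -a < -1))).mul_left _ |>.congr
      fun k => by push_cast; rfl)
    ((summable_nat_add_iff 1).mpr hsq) fun k j => ?_
  set x : ℝ := (k : ℝ) + 1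
  set S := ∑ l ∈ Finset.Icc (j + 1) (j + k + 1), ε l
  have hx : 1 ≤ x := by simp [x]
  have hS0 : S ≤ 0 := Finset.sum_nonpos fun l _ => hε0 l
  have hSlb : x * ε (j + 1) ≤ S := by
    have := Finset.card_nsmul_le_sum (Finset.Icc (j + 1) (j + k + 1)) ε (ε (j + 1))
      fun l hl => have hl := (Finset.mem_Icc.mp hl).1
        hmono (mem_Ici.2 (by omega)) (mem_Ici.2 (by omega)) hl
    rwa [Nat.card_Icc, show j + k + 1 + 1 - (j + 1) = k + 1 by omega, nsmul_eq_mul,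
      Nat.cast_add_one] at this
  have hεj : -(1 / 2) ≤ ε (j + 1) :=
    hε1.trans (hmono (mem_Ici.2 le_rfl) (mem_Ici.2 (by omega)) (by omega))
  have hxS : x / 2 ≤ x + S := by nlinarith
  set M := c * 2 ^ (a + 2) * x ^ (-(a + 2))
  have hM : ∀ t ∈ Icc (x + S) x, deriv (deriv V) t ≤ M := fun t ht => by
    have ht : x / 2 ≤ t := hxS.trans ht.1
    have hx2 : 0 < x / 2 := by linarith
    calc deriv (deriv V) t ≤ c * t ^ (-(a + 2)) := by
          simpa [abs_of_pos (hx2.trans_le ht)] using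
            hc t (by rw [abs_of_pos (hx2.trans_le ht)]; linarith)
      _ ≤ c * (x / 2) ^ (-(a + 2)) :=
          mul_le_mul_of_nonneg_left (Real.rpow_le_rpow_of_nonpos hx2 ht
            (by linarith [h.one_lt_a])) hc0.le
      _ = M := by
          rw [Real.div_rpow (by linarith) (by norm_num), Real.rpow_neg (by norm_num : (0 : ℝ) ≤ 2)]
          field_simp
          ring
  calc phi V x S ≤ M * S ^ 2 := phi_le_mul_sq h.smooth (by linarith) hS0 (by positivity) hM
    _ ≤ M * (x * ε (j + 1)) ^ 2 :=
        mul_le_mul_of_nonneg_left (by nlinarith [hε0 (j + 1)]) (by positivity)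
    _ = c * 2 ^ (a + 2) * x ^ (-a) * ε (j + 1) ^ 2 := by
        have hxa : x ^ (-a) = x ^ (-(a + 2)) * x ^ 2 := by
          rw [← Real.rpow_natCast, ← Real.rpow_add (by linarith)]
          norm_num
        rw [hxa]
        ring

lemma linPart_eq_bot {ε : ℕ → ℝ} (hle : ∀ i, sigmaInf V i * ε i ≤ 0)
    (hns : ¬Summable fun i => sigmaInf V i * ε i) : linPart V ε = ⊥ := by
  have hpos : ∑' i, ENNReal.ofReal (sigmaInf V i * ε i) = 0 := by
    simp [ENNReal.ofReal_of_nonpos (hle _)]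
  have hneg : ∑' i, ENNReal.ofReal (-(sigmaInf V i * ε i)) = ⊤ := by
    by_contra hne
    refine hns ((ENNReal.summable_toReal hne).neg.congr fun i => ?_)
    rw [ENNReal.toReal_ofReal (by linarith [hle i]), neg_neg]
  rw [linPart, hpos, hneg]
  simp

end Energy

noncomputable def testSeq (b : ℝ) (i : ℕ) : ℝ := -(i : ℝ) ^ (-b) / 2

section TestSeq

variable {b : ℝ}

lemma testSeq_nonpos (b : ℝ) (i : ℕ) : testSeq b i ≤ 0 := by
  have := Real.rpow_nonneg (Nat.cast_nonneg i) (-b)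
  simp only [testSeq]
  linarith

lemma abs_testSeq (b : ℝ) (i : ℕ) : |testSeq b i| = (i : ℝ) ^ (-b) / 2 := by
  rw [abs_of_nonpos (testSeq_nonpos b i), testSeq]
  ring

lemma neg_half_le_testSeq (hb : 0 ≤ b) (i : ℕ) : -(1 / 2) ≤ testSeq b i := by
  have : (i : ℝ) ^ (-b) ≤ 1 := by
    rcases Nat.eq_zero_or_pos i with rfl | hi
    · simpa using Real.zero_rpow_le_one (-b)
    · exact Real.rpow_le_one_of_one_le_of_nonpos (by exact_mod_cast hi) (by linarith)
  simp only [testSeq]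
  linarith

lemma testSeq_monotoneOn (hb : 0 ≤ b) : MonotoneOn (testSeq b) (Ici 1) := fun i hi j _ hij => by
  have hi : (0 : ℝ) < i := by simp only [mem_Ici] at hi; exact_mod_cast hi
  have := Real.rpow_le_rpow_of_nonpos hi (by exact_mod_cast hij : (i : ℝ) ≤ j)
    (by linarith : -b ≤ 0)
  simp only [testSeq]
  linarith

lemma testSeq_mem_DomEinfl (hb : 1 / 2 < b) : testSeq b ∈ DomEinfl := by
  refine ⟨(Real.summable_nat_rpow.mpr (by linarith : -b * 2 < -1)).div_const 4 |>.congr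
    fun i => ?_, by simp [testSeq, Real.zero_rpow (by linarith : -b ≠ 0)],
    fun i _ => by linarith [neg_half_le_testSeq (by linarith : (0 : ℝ) ≤ b) i]⟩
  rw [testSeq, Real.rpow_mul (Nat.cast_nonneg i), Real.rpow_two]
  ring

end TestSeq

lemma not_summable_sigmaInf_mul_abs_testSeq {V : ℝ → ℝ} {a b C c : ℝ} (ha : 1 < a) (hb0 : 0 ≤ b)
    (hb : b < 2 - a) (hc : 0 < c)
    (hlow : ∀ x : ℝ, 1 ≤ x → c * x ^ (-(a + 1)) ≤ |deriv V x|)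
    (hup : ∀ x : ℝ, 1 ≤ x → |deriv V x| ≤ C * x ^ (-(a + 1))) :
    ¬Summable fun i : ℕ => sigmaInf V i * |testSeq b i| := by
  intro hS
  set K := c * 2 ^ (-(a + 1)) / 2 / 2
  have hK : 0 < K := by positivity
  have hbound : ∀ i : ℕ, K * (i : ℝ) ^ (1 - a - b) ≤ sigmaInf V i * |testSeq b i| := fun i => by
    rw [abs_testSeq, show 1 - a - b = (1 - a) + -b by ring,
      Real.rpow_add' (Nat.cast_nonneg i) (by linarith)]
    calc K * ((i : ℝ) ^ (1 - a) * (i : ℝ) ^ (-b))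
        = c * 2 ^ (-(a + 1)) / 2 * (i : ℝ) ^ (1 - a) * ((i : ℝ) ^ (-b) / 2) := by ring
      _ ≤ sigmaInf V i * ((i : ℝ) ^ (-b) / 2) :=
        mul_le_mul_of_nonneg_right
          (rpow_le_sigmaInf ha hc.le hlow i (summable_sigmaInf_terms ha hup i)) (by positivity)
  have := Summable.of_nonneg_of_le (fun i => by positivity) hbound hS
  have := Real.summable_nat_rpow.mp ((summable_mul_left_iff hK.ne').mp this)
  linarith

theorem statement18_general (V : ℝ → ℝ) (a : ℝ) (h : BasicAssumptions V a)
    (c₁ c₂ : ℝ) (hc₁ : 0 < c₁)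
    (hV'' : ∀ x : ℝ, 1 ≤ x →
      c₁ * x ^ (-(a + 2)) ≤ deriv (deriv V) x ∧
        deriv (deriv V) x ≤ c₂ * x ^ (-(a + 2)))
    (b : ℝ) (hb1 : 1 / 2 < b) (hb2 : b < 2 - a) :
    (fun i : ℕ => -(i : ℝ) ^ (-b) / 2) ∈ DomEinfl ∧
    Qinf V (fun i : ℕ => -(i : ℝ) ^ (-b) / 2) < ⊤ ∧
    ¬ Summable (fun i : ℕ => sigmaInf V i * |(-(i : ℝ) ^ (-b) / 2)|) ∧
    Einfl V (fun i : ℕ => -(i : ℝ) ^ (-b) / 2) = ⊥ := by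
  show testSeq b ∈ DomEinfl ∧ Qinf V (testSeq b) < ⊤ ∧
    ¬Summable (fun i => sigmaInf V i * |testSeq b i|) ∧ Einfl V (testSeq b) = ⊥
  have hb0 : 0 ≤ b := by linarith
  have ha1 : 0 < a + 1 := by linarith [h.one_lt_a]
  obtain ⟨C, hV'⟩ := exists_rpow_bounds_abs_deriv h hc₁.le fun x hx => (hV'' x hx).1
  have hns : ¬Summable fun i : ℕ => sigmaInf V i * |testSeq b i| :=
    not_summable_sigmaInf_mul_abs_testSeq h.one_lt_a hb0 hb2 (div_pos hc₁ ha1)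
      (fun x hx => (hV' x hx).1) (fun x hx => (hV' x hx).2)
  have hlin : linPart V (testSeq b) = ⊥ :=
    linPart_eq_bot (fun i => mul_nonpos_of_nonneg_of_nonpos (sigmaInf_nonneg V i)
      (testSeq_nonpos b i)) fun hS => hns <| hS.neg.congr fun i => by
        rw [abs_of_nonpos (testSeq_nonpos b i), mul_neg]
  exact ⟨testSeq_mem_DomEinfl hb1,
    Qinf_lt_top h (testSeq_nonpos b) (testSeq_monotoneOn hb0) (neg_half_le_testSeq hb0 1)
      (testSeq_mem_DomEinfl hb1).1, hns, by rw [Einfl, hlin, EReal.add_bot]⟩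

/-- for 1 < a < 3/2 (with two-sided bounds on V''), the test
sequence ε(i) = −i^{−b}/2, 1/2 < b < 2 − a, lies in Dom E_∞^l, has finite
quadratic part Q_∞(ε), but divergent linear part; hence E_∞^l(ε) = −∞ and
E_∞^l is not bounded below. -/
theorem statement18 (V : ℝ → ℝ) (a : ℝ) (h : BasicAssumptions V a)
    (ha : a < 3 / 2)
    (c₁ c₂ : ℝ) (hc₁ : 0 < c₁) (hc₂ : 0 < c₂)
    (hV'' : ∀ x : ℝ, 1 ≤ x →
      c₁ * x ^ (-(a + 2)) ≤ deriv (deriv V) x ∧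
        deriv (deriv V) x ≤ c₂ * x ^ (-(a + 2)))
    (b : ℝ) (hb1 : 1 / 2 < b) (hb2 : b < 2 - a) :
    (fun i : ℕ => -(i : ℝ) ^ (-b) / 2) ∈ DomEinfl ∧
    Qinf V (fun i : ℕ => -(i : ℝ) ^ (-b) / 2) < ⊤ ∧
    ¬ Summable (fun i : ℕ => sigmaInf V i * |(-(i : ℝ) ^ (-b) / 2)|) ∧
    Einfl V (fun i : ℕ => -(i : ℝ) ^ (-b) / 2) = ⊥ :=
  statement18_general V a h c₁ c₂ hc₁ hV'' b hb1 hb2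
end
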